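/- For each n, let B_1, …, B_n be independent random variables each uniformly distributed on {1, …, n} (n balls thrown independently and uniformly into n bins), and let L_n = max_{j ∈ {1,…,n}} #{i : B_i = j} be the maximum load. Then P(L_n ≥ 3·log n / log log n) → 0 as n → ∞. -/

import Mathlib

/-!
A bin holds at least `k` balls only if some `k`-set of balls all land in it, so the union bound
over bins and `k`-sets gives `P(L_n ≥ k) ≤ n · C(n, k) · n^{-k} ≤ n / k!`. For
`k = ⌈3 log n / log log n⌉` we have `log k ≈ log log n`, hence `k! ≥ (k / e)^k ≥ n²`
for large `n`, and the probability is at most `1 / n`.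
-/

open Filter

/-- The maximum load when the balls are placed according to `f : Fin n → Fin n`
(ball `i` goes into bin `f i`). -/
def maxLoad {n : ℕ} (f : Fin n → Fin n) : ℕ :=
  Finset.univ.sup fun j => (Finset.univ.filter fun i => f i = j).card

open Finset

section Counting

variable {α β : Type*} [Fintype α] [DecidableEq α] [Fintype β] [DecidableEq β]

theorem card_filter_forall_mem_eq (s : Finset α) (b : β) :
    #{f : α → β | ∀ a ∈ s, f a = b} = Fintype.card β ^ (Fintype.card α - #s) := by
  have hpi : ({f : α → β | ∀ a ∈ s, f a = b} : Finset (α → β))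
      = Fintype.piFinset fun a => if a ∈ s then {b} else univ := by
    ext f
    simp only [mem_filter, mem_univ, true_and, Fintype.mem_piFinset]
    refine forall_congr' fun a => ?_
    split_ifs <;> simp [*]
  simp_rw [hpi, Fintype.card_piFinset, apply_ite card, card_singleton, card_univ]
  rw [prod_ite, prod_const_one, prod_const, one_mul, filter_not, filter_mem_eq_inter, univ_inter,
    card_univ_sdiff]

theorem card_le_card_fiber_le (k : ℕ) (b : β) :
    #{f : α → β | k ≤ #{a | f a = b}}
      ≤ (Fintype.card α).choose k * Fintype.card β ^ (Fintype.card α - k) := by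
  calc #{f : α → β | k ≤ #{a | f a = b}}
      ≤ #((powersetCard k univ).biUnion fun s => {f : α → β | ∀ a ∈ s, f a = b}) := by
        refine card_le_card fun f hf => ?_
        obtain ⟨s, hs, hcard⟩ := exists_subset_card_eq (mem_filter.1 hf).2
        simp only [mem_biUnion, mem_powersetCard, mem_filter, mem_univ, true_and]
        exact ⟨s, ⟨subset_univ s, hcard⟩, fun a ha => (mem_filter.1 (hs ha)).2⟩
    _ ≤ ∑ s ∈ powersetCard k univ, #{f : α → β | ∀ a ∈ s, f a = b} := card_biUnion_le
    _ = (Fintype.card α).choose k * Fintype.card β ^ (Fintype.card α - k) := by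
        rw [sum_congr rfl fun s hs => by rw [card_filter_forall_mem_eq, (mem_powersetCard.1 hs).2],
          sum_const, card_powersetCard, card_univ, smul_eq_mul]

end Counting

theorem le_maxLoad_iff {n k : ℕ} (hk : 0 < k) (f : Fin n → Fin n) :
    k ≤ maxLoad f ↔ ∃ j, k ≤ #{i | f i = j} := by
  simp [maxLoad, Finset.le_sup_iff (bot_lt_iff_ne_bot.2 hk.ne')]

theorem card_le_maxLoad_le {n k : ℕ} (hk : 0 < k) :
    #{f : Fin n → Fin n | k ≤ maxLoad f} ≤ n * (n.choose k * n ^ (n - k)) := by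
  calc #{f : Fin n → Fin n | k ≤ maxLoad f}
      ≤ #((univ : Finset (Fin n)).biUnion fun j =>
            {f : Fin n → Fin n | k ≤ #{i | f i = j}}) := by
        refine card_le_card fun f hf => ?_
        simpa [le_maxLoad_iff hk] using hf
    _ ≤ ∑ j : Fin n, #{f : Fin n → Fin n | k ≤ #{i | f i = j}} := card_biUnion_le
    _ ≤ ∑ _j : Fin n, n.choose k * n ^ (n - k) := by
        gcongr with j
        simpa using card_le_card_fiber_le (α := Fin n) k j
    _ = n * (n.choose k * n ^ (n - k)) := by simp

theorem card_le_maxLoad_div_pow_le {n k : ℕ} (hk : 0 < k) :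
    (#{f : Fin n → Fin n | k ≤ maxLoad f} : ℝ) / n ^ n ≤ n / k.factorial := by
  have hcount : (#{f : Fin n → Fin n | k ≤ maxLoad f} : ℝ)
      ≤ n * (n.choose k * n ^ (n - k)) := by
    exact_mod_cast card_le_maxLoad_le hk
  rcases le_or_gt k n with hkn | hnk
  · calc (#{f : Fin n → Fin n | k ≤ maxLoad f} : ℝ) / n ^ n
        ≤ n * (n ^ k / k.factorial * n ^ (n - k)) / n ^ n := by
          gcongr
          exact hcount.trans (by gcongr; exact Nat.choose_le_pow_div k n)
      _ = n / k.factorial := by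
          have hn : (n : ℝ) ≠ 0 := by exact_mod_cast (hk.trans_le hkn).ne'
          rw [← pow_mul_pow_sub (n : ℝ) hkn]
          field_simp
  · rw [Nat.choose_eq_zero_of_lt hnk, Nat.cast_zero, zero_mul, mul_zero] at hcount
    exact (div_nonpos_of_nonpos_of_nonneg hcount (by positivity)).trans (by positivity)

open Real

theorem exp_mul_log_sub_one_le_factorial (k : ℕ) : exp (k * (log k - 1)) ≤ k.factorial := by
  rcases Nat.eq_zero_or_pos k with rfl | hk
  · simp
  have hkpow : exp (k * log k) = (k : ℝ) ^ k := by
    rw [← log_pow, exp_log (by positivity)]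
  rw [mul_sub_one, exp_sub, hkpow, div_le_iff₀ (exp_pos _), ← div_le_iff₀' (by positivity)]
  exact pow_div_factorial_le_exp (k : ℝ) (Nat.cast_nonneg k) k

theorem eventually_two_mul_le_mul_log_sub_one :
    ∀ᶠ t : ℝ in atTop, 2 * t ≤ 3 * t / log t * (log (3 * t / log t) - 1) := by
  have hlog_le : ∀ᶠ u : ℝ in atTop, ‖log u‖ ≤ 1 / 6 * ‖u‖ :=
    isLittleO_log_id_atTop.bound (by norm_num)
  filter_upwards [tendsto_log_atTop.eventually hlog_le, tendsto_log_atTop.eventually_ge_atTop 6,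
    eventually_gt_atTop 0] with t hlogu hu ht
  set u := log t
  rw [norm_of_nonneg (log_nonneg (by linarith)), norm_of_nonneg (by linarith)] at hlogu
  have hlog : log (3 * t / u) = log 3 + u - log u := by
    rw [log_div (by positivity) (by positivity), log_mul (by norm_num) ht.ne']
  have hlog3 : 0 ≤ log 3 := log_nonneg (by norm_num)
  calc 2 * t = 3 * t / u * (2 * u / 3) := by field_simp
    _ ≤ 3 * t / u * (log (3 * t / u) - 1) := by
        gcongr
        rw [hlog]
        linarith

theorem eventually_sq_le_factorial_ceil :
    ∀ᶠ n : ℕ in atTop, (n : ℝ) ^ 2 ≤ (⌈3 * log n / log (log n)⌉₊).factorial := by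
  have hlog : Tendsto (fun n : ℕ => log n) atTop atTop :=
    tendsto_log_atTop.comp tendsto_natCast_atTop_atTop
  filter_upwards [hlog.eventually eventually_two_mul_le_mul_log_sub_one,
    hlog.eventually_gt_atTop 1, eventually_gt_atTop 0] with n hbound hL hn
  set x := 3 * log n / log (log n)
  set k := ⌈x⌉₊
  have hx : 0 < x := div_pos (by linarith) (log_pos hL)
  have hlogx : 0 ≤ log x - 1 :=
    (pos_of_mul_pos_right (by linarith : 0 < x * (log x - 1)) hx.le).le
  have hxk : x ≤ k := Nat.le_ceil x
  calc (n : ℝ) ^ 2 = exp (2 * log n) := by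
        rw [← exp_log (by positivity : (0 : ℝ) < n ^ 2), log_pow, Nat.cast_ofNat]
    _ ≤ exp (x * (log x - 1)) := exp_le_exp.2 hbound
    _ ≤ exp (k * (log k - 1)) := by gcongr
    _ ≤ k.factorial := exp_mul_log_sub_one_le_factorial k

/-- Balls-into-bins upper bound: throwing `n` balls independently and uniformly
at random into `n` bins (uniform measure over all `n^n` placements), the
probability that the maximum load is at least `3·log n / log log n` tends to
`0` as `n → ∞`. -/
theorem balls_into_bins_upper :
    Tendsto (fun n : ℕ =>
        ((Finset.univ.filter fun f : Fin n → Fin n =>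
            3 * Real.log n / Real.log (Real.log n) ≤ (maxLoad f : ℝ)).card : ℝ)
          / (n : ℝ) ^ n)
      atTop (nhds 0) := by
  refine squeeze_zero' (Eventually.of_forall fun n => by positivity) ?_
    tendsto_one_div_atTop_nhds_zero_nat
  filter_upwards [eventually_sq_le_factorial_ceil, eventually_ge_atTop 2] with n hfact hn
  simp_rw [← Nat.ceil_le]
  set k := ⌈3 * log n / log (log n)⌉₊
  have hk : 0 < k := Nat.pos_of_ne_zero fun hk0 => by
    rw [hk0, Nat.factorial_zero, Nat.cast_one] at hfact
    nlinarith [(Nat.ofNat_le_cast.2 hn : (2 : ℝ) ≤ n)]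
  have hn0 : (n : ℝ) ≠ 0 := by positivity
  calc _ ≤ (n : ℝ) / k.factorial := card_le_maxLoad_div_pow_le hk
    _ ≤ n / n ^ 2 := by gcongr
    _ = 1 / n := by field_simp
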